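/- Every L^0-linear automorphism α of the algebra F(D) of finite-generated L^0-linear operators on D is spatial: there exists an invertible x ∈ L(D) with x⁻¹ ∈ L(D) such that α(a) = x a x⁻¹ for all a ∈ F(D). -/

import Mathlib

open MeasureTheory

namespace KHPaper

variable {Ω : Type} [MeasurableSpace Ω] {μ : Measure Ω}

/-- `L⁰(Ω)`: measurable complex functions modulo a.e. equality. -/
abbrev L0 (Ω : Type) [MeasurableSpace Ω] (μ : Measure Ω) := Ω →ₘ[μ] ℂ
/-- real-valued `L⁰`. -/
abbrev L0R (Ω : Type) [MeasurableSpace Ω] (μ : Measure Ω) := Ω →ₘ[μ] ℝ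

noncomputable instance : CommRing (L0 Ω μ) :=
  { (inferInstance : AddCommGroup (L0 Ω μ)),
    (inferInstance : CommMonoid (L0 Ω μ)) with
    left_distrib := by
      intro a b c
      apply AEEqFun.ext
      filter_upwards [AEEqFun.coeFn_mul a (b + c), AEEqFun.coeFn_add b c,
        AEEqFun.coeFn_mul a b, AEEqFun.coeFn_mul a c,
        AEEqFun.coeFn_add (a * b) (a * c)] with x h1 h2 h3 h4 h5
      simp only [h1, h5, Pi.mul_apply, Pi.add_apply, h2, h3, h4, mul_add]
    right_distrib := by
      intro a b c
      apply AEEqFun.ext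
      filter_upwards [AEEqFun.coeFn_mul (a + b) c, AEEqFun.coeFn_add a b,
        AEEqFun.coeFn_mul a c, AEEqFun.coeFn_mul b c,
        AEEqFun.coeFn_add (a * c) (b * c)] with x h1 h2 h3 h4 h5
      simp only [h1, h5, Pi.mul_apply, Pi.add_apply, h2, h3, h4, add_mul]
    zero_mul := by
      intro a
      apply AEEqFun.ext
      filter_upwards [AEEqFun.coeFn_mul 0 a, AEEqFun.coeFn_zero (β := ℂ) (μ := μ)] with x h1 h2
      simp [h1, h2]
    mul_zero := by
      intro a
      apply AEEqFun.ext
      filter_upwards [AEEqFun.coeFn_mul a 0, AEEqFun.coeFn_zero (β := ℂ) (μ := μ)] with x h1 h2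
      simp [h1, h2] }

/-- pointwise absolute value `L⁰ → L⁰ℝ`. -/
noncomputable def absL (f : L0 Ω μ) : L0R Ω μ := f.comp (fun z : ℂ => ‖z‖) continuous_norm
/-- pointwise real part. -/
noncomputable def reL (f : L0 Ω μ) : L0R Ω μ := f.comp Complex.re Complex.continuous_re
/-- pointwise complex conjugation. -/
noncomputable def conjL (f : L0 Ω μ) : L0 Ω μ :=
  f.comp (starRingEnd ℂ) (by continuity)
/-- embedding of real `L⁰` into complex `L⁰`. -/
noncomputable def ofRealL (f : L0R Ω μ) : L0 Ω μ := f.comp Complex.ofReal Complex.continuous_ofReal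
/-- pointwise square root on real `L⁰`. -/
noncomputable def sqrtL (f : L0R Ω μ) : L0R Ω μ := f.comp Real.sqrt Real.continuous_sqrt
/-- constants. -/
noncomputable def constL (Ω : Type) [MeasurableSpace Ω] (μ : Measure Ω) (c : ℂ) : L0 Ω μ :=
  AEEqFun.const Ω c

/-- idempotents of `L⁰` (the Boolean algebra `∇`). -/
def IsIdem (π : L0 Ω μ) : Prop := π * π = π

/-- A family of idempotents is a partition of the unit in `∇`. -/
def IsPartition {ι : Type*} (π : ι → L0 Ω μ) : Prop :=
  (∀ i, IsIdem (π i)) ∧ (∀ i j, i ≠ j → π i * π j = 0) ∧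
    (∀ e : L0 Ω μ, IsIdem e → (∀ i, π i * e = 0) → e = 0)

/-- a decreasing net of nonnegative elements of `L⁰ℝ` has infimum zero. -/
def InfZero {ι : Type*} (e : ι → L0R Ω μ) : Prop :=
  (∀ i, 0 ≤ e i) ∧ ∀ g : L0R Ω μ, (∀ i, g ≤ e i) → g ≤ 0

/-- `(o)`-convergence of a net in `L⁰ℝ`. -/
def OConv {ι : Type*} [Preorder ι] (f : ι → L0R Ω μ) (l : L0R Ω μ) : Prop :=
  ∃ e : ι → L0R Ω μ, Antitone e ∧ InfZero e ∧ ∀ i, |f i - l| ≤ e i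

/-- `(o)`-summability of a family in `L⁰ℝ` (order convergence of the net of partial sums). -/
def OSummable {ι : Type*} (g : ι → L0R Ω μ) : Prop :=
  ∃ s : L0R Ω μ, OConv (fun F : Finset ι => ∑ i ∈ F, g i) s

section LNS

variable {X : Type*} [AddCommGroup X]

/-- An `L⁰`-valued norm making `X` a lattice-normed space over `L⁰` (complex vector space case). -/
structure LNSNorm (Ω : Type) [MeasurableSpace Ω] (μ : Measure Ω)
    (X : Type*) [AddCommGroup X] [Module ℂ X] where
  nrm : X → L0R Ω μ
  nrm_nonneg : ∀ x, 0 ≤ nrm x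
  nrm_eq_zero : ∀ x, nrm x = 0 ↔ x = 0
  nrm_smul : ∀ (c : ℂ) (x : X), nrm (c • x) = ‖c‖ • nrm x
  nrm_triangle : ∀ x y, nrm (x + y) ≤ nrm x + nrm y

variable [Module ℂ X]

/-- `d`-decomposability (Kantorovich norm). -/
def LNSNorm.DDecomp (N : LNSNorm Ω μ X) : Prop :=
  ∀ (x : X) (e₁ e₂ : L0R Ω μ), 0 ≤ e₁ → 0 ≤ e₂ → e₁ ⊓ e₂ = 0 → N.nrm x = e₁ + e₂ →
    ∃ x₁ x₂ : X, x = x₁ + x₂ ∧ N.nrm x₁ = e₁ ∧ N.nrm x₂ = e₂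

/-- `(bo)`-convergence of a net in `X`. -/
def LNSNorm.BOConv (N : LNSNorm Ω μ X) {ι : Type*} [Preorder ι] (f : ι → X) (l : X) : Prop :=
  OConv (fun i => N.nrm (f i - l)) 0

/-- `(bo)`-Cauchy nets. -/
def LNSNorm.BOCauchy (N : LNSNorm Ω μ X) {ι : Type*} [Preorder ι] (f : ι → X) : Prop :=
  ∃ e : ι → L0R Ω μ, Antitone e ∧ InfZero e ∧
    ∀ i j k, k ≤ i → k ≤ j → N.nrm (f i - f j) ≤ e k

/-- `(bo)`-completeness. -/
def LNSNorm.BOComplete (N : LNSNorm Ω μ X) : Prop :=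
  ∀ (ι : Type) (_ : Nonempty ι) (_ : SemilatticeSup ι) (f : ι → X),
    N.BOCauchy f → ∃ l : X, N.BOConv f l

end LNS

section Norms
variable {X : Type*} [AddCommGroup X]
def DDecompN (nrm : X → L0R Ω μ) : Prop :=
  ∀ (x : X) (e₁ e₂ : L0R Ω μ), 0 ≤ e₁ → 0 ≤ e₂ → e₁ ⊓ e₂ = 0 → nrm x = e₁ + e₂ →
    ∃ x₁ x₂ : X, x = x₁ + x₂ ∧ nrm x₁ = e₁ ∧ nrm x₂ = e₂
def BOConvN (nrm : X → L0R Ω μ) {ι : Type*} [Preorder ι] (f : ι → X) (l : X) : Prop :=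
  OConv (fun i => nrm (f i - l)) 0
def BOCauchyN (nrm : X → L0R Ω μ) {ι : Type*} [Preorder ι] (f : ι → X) : Prop :=
  ∃ e : ι → L0R Ω μ, Antitone e ∧ InfZero e ∧
    ∀ i j k, k ≤ i → k ≤ j → nrm (f i - f j) ≤ e k
def BOCompleteN (nrm : X → L0R Ω μ) : Prop :=
  ∀ (ι : Type) (_ : Nonempty ι) (_ : SemilatticeSup ι) (f : ι → X),
    BOCauchyN nrm f → ∃ l : X, BOConvN nrm f l
def BODenseN (nrm : X → L0R Ω μ) (D : Set X) : Prop :=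
  ∀ x : X, ∃ (ι : Type) (_ : Nonempty ι) (_ : SemilatticeSup ι) (f : ι → X),
    (∀ i, f i ∈ D) ∧ BOConvN nrm f x
end Norms

/-- An `L⁰`-valued inner product on an `L⁰`-module. -/
structure KHInner (Ω : Type) [MeasurableSpace Ω] (μ : Measure Ω)
    (X : Type*) [AddCommGroup X] [Module (L0 Ω μ) X] where
  inner : X → X → L0 Ω μ
  add_left : ∀ x y z, inner (x + y) z = inner x z + inner y z
  smul_left : ∀ (c : L0 Ω μ) (x y : X), inner (c • x) y = c * inner x y
  conj_symm : ∀ x y, inner x y = conjL (inner y x)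
  self_real : ∀ x, inner x x = ofRealL (reL (inner x x))
  self_nonneg : ∀ x, 0 ≤ reL (inner x x)
  definite : ∀ x, inner x x = 0 → x = 0

section KH
variable {X : Type*} [AddCommGroup X] [Module (L0 Ω μ) X]
noncomputable def KHInner.knorm (K : KHInner Ω μ X) (x : X) : L0R Ω μ :=
  sqrtL (reL (K.inner x x))
/-- `X` is a Kaplansky-Hilbert module: the induced norm is d-decomposable and (bo)-complete. -/
def KHInner.IsKH (K : KHInner Ω μ X) : Prop := DDecompN K.knorm ∧ BOCompleteN K.knorm

variable (K : KHInner Ω μ X) (D : Submodule (L0 Ω μ) X)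
/-- operators with domain `D` mapping into `D`. -/
def MapsD (a : D →ₗ[L0 Ω μ] X) : Prop := ∀ φ : D, a φ ∈ D
def IsAdjAt (a : D →ₗ[L0 Ω μ] X) (ψ χ : X) : Prop :=
  ∀ φ : D, K.inner (a φ) ψ = K.inner (φ : X) χ
def AdjDomain (a : D →ₗ[L0 Ω μ] X) : Set X := {ψ | ∃ χ, IsAdjAt K D a ψ χ}
/-- `L⁺(D)`. -/
def LPlus : Set (D →ₗ[L0 Ω μ] X) :=
  {a | MapsD D a ∧ (D : Set X) ⊆ AdjDomain K D a ∧
       ∀ ψ ∈ D, ∃ χ ∈ D, IsAdjAt K D a ψ χ}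
def BOClosableOp (a : D →ₗ[L0 Ω μ] X) : Prop :=
  ∀ (ι : Type) (_ : Nonempty ι) (_ : SemilatticeSup ι) (f : ι → D) (y : X),
    BOConvN K.knorm (fun i => (f i : X)) 0 → BOConvN K.knorm (fun i => a (f i)) y → y = 0
/-- composition `a ∘ b` of operators on `D`, when `b` maps into `D`. -/
noncomputable def compD (a b : D →ₗ[L0 Ω μ] X) (hb : MapsD D b) : D →ₗ[L0 Ω μ] X :=
  a.comp (LinearMap.codRestrict D b hb)

/-- endomorphism version: an operator on `D` having an adjoint with domain `⊇ D` and values in `D`. -/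
def HasAdjE (a : Module.End (L0 Ω μ) D) : Prop :=
  ∀ ψ : D, ∃ χ : D, ∀ φ : D, K.inner (a φ : X) (ψ : X) = K.inner (φ : X) (χ : X)
/-- `L⁺(D)` realized inside `End(D)`. -/
def LPlusE : Set (Module.End (L0 Ω μ) D) := {a | HasAdjE K D a}
def IsAdjPairE (a b : Module.End (L0 Ω μ) D) : Prop :=
  ∀ φ ψ : D, K.inner (a φ : X) (ψ : X) = K.inner (φ : X) (b ψ : X)
/-- the rank one operator `φ ⊗ ψ` on `D`. -/
noncomputable def rankOneE (φ ψ : D) : Module.End (L0 Ω μ) D where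
  toFun η := K.inner (η : X) (ψ : X) • φ
  map_add' a b := by
    show K.inner (↑(a + b)) _ • φ = _
    rw [Submodule.coe_add, K.add_left]
    exact add_smul _ _ φ
  map_smul' c a := by
    show K.inner (↑(c • a)) _ • φ = _
    rw [Submodule.coe_smul, K.smul_left, RingHom.id_apply]
    exact mul_smul c _ φ
end KH

section Ops
variable {M : Type*} [AddCommGroup M] [Module (L0 Ω μ) M]
/-- finite-generated operator: its range is a finite-generated submodule. -/
def FinGenOp (a : Module.End (L0 Ω μ) M) : Prop :=
  ∃ (n : ℕ) (g : Fin n → M), ∀ x : M, ∃ c : Fin n → L0 Ω μ, a x = ∑ i, c i • g i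
def IsSubalgebraSet (U : Set (Module.End (L0 Ω μ) M)) : Prop :=
  (∀ a ∈ U, ∀ b ∈ U, a + b ∈ U) ∧ (∀ (c : L0 Ω μ), ∀ a ∈ U, c • a ∈ U) ∧
    (∀ a ∈ U, ∀ b ∈ U, a * b ∈ U)
/-- standard algebras of operators: subalgebras containing all finite-generated operators. -/
def IsStandard (U : Set (Module.End (L0 Ω μ) M)) : Prop :=
  IsSubalgebraSet U ∧ ∀ a, FinGenOp a → a ∈ U
/-- the operator `a` is homogeneous of type one: `d(π ⬝ a(M)) = 1` for every nonzero idempotent. -/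
def HomogOneOp (a : Module.End (L0 Ω μ) M) : Prop :=
  ∀ π : L0 Ω μ, IsIdem π → π ≠ 0 →
    (∃ g ∈ Set.range a, ∀ x ∈ Set.range a, ∃ c : L0 Ω μ, π • x = c • (π • g)) ∧
    ∃ x ∈ Set.range a, π • x ≠ 0
end Ops

section DirectSum
variable {I : Type} [DecidableEq I] {X : I → Type*}
  [∀ i, AddCommGroup (X i)] [∀ i, Module (L0 Ω μ) (X i)]
  (K : ∀ i, KHInner Ω μ (X i)) (D : ∀ i, Submodule (L0 Ω μ) (X i))

/-- `D_I`: the submodule of the direct sum consisting of finitely supported tuples. -/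
abbrev DI (D : ∀ i, Submodule (L0 Ω μ) (X i)) := Π₀ i, ↥(D i)

/-- the inner product of `X_I` restricted to `D_I`. -/
noncomputable def innerDI (φ ψ : DI D) : L0 Ω μ :=
  letI : ∀ (i : I) (x : ↥(D i)), Decidable (x ≠ 0) := fun _ x => Classical.dec _
  φ.sum fun i x => (K i).inner (x : X i) ((ψ i : X i))

/-- the canonical copy of an operator on `D i` acting on `D_I`. -/
noncomputable def coordOp (i : I) (b : Module.End (L0 Ω μ) ↥(D i)) :
    Module.End (L0 Ω μ) (DI D) :=
  (DFinsupp.lsingle (R := L0 Ω μ) i).comp (b.comp (DFinsupp.lapply (R := L0 Ω μ) i))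

/-- the canonical copy of the rank one operator `φ ⊗ φ`, `φ ∈ D i`, on `D_I`. -/
noncomputable def coordRankOne (i : I) (φ : ↥(D i)) : Module.End (L0 Ω μ) (DI D) :=
  coordOp D i (rankOneE (K i) (D i) φ φ)

/-- coordinatewise operators `(a_i)` with each `a_i ∈ L⁺(D_i)`: the algebra `L⁺(D_i : i ∈ I)`. -/
def CoordLPlus : Set (Module.End (L0 Ω μ) (DI D)) :=
  {a | ∃ f : ∀ i, Module.End (L0 Ω μ) ↥(D i),
    (∀ i, HasAdjE (K i) (D i) (f i)) ∧ ∀ (φ : DI D) (i : I), a φ i = f i (φ i)}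

/-- adjoint pairs on `D_I`. -/
def IsAdjPairDI (a b : Module.End (L0 Ω μ) (DI D)) : Prop :=
  ∀ φ ψ : DI D, innerDI K D (a φ) ψ = innerDI K D φ (b ψ)

/-- the maximal `O*`-algebra `L⁺(D_I)`. -/
def LPlusDI : Set (Module.End (L0 Ω μ) (DI D)) :=
  {a | ∃ b, IsAdjPairDI K D a b}

/-- `*`-subalgebras of operators on `D_I`. -/
def IsStarSubalgDI (A : Set (Module.End (L0 Ω μ) (DI D))) : Prop :=
  IsSubalgebraSet A ∧ ∀ a ∈ A, ∃ b ∈ A, IsAdjPairDI K D a b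

/-- projections on `D_I`: idempotent and self-adjoint. -/
def IsProjDI (p : Module.End (L0 Ω μ) (DI D)) : Prop :=
  p * p = p ∧ IsAdjPairDI K D p p

/-- the range of `p` is concentrated on a single coordinate. -/
def SingleCoordRange (p : Module.End (L0 Ω μ) (DI D)) : Prop :=
  ∃ i : I, ∀ (φ : DI D) (j : I), j ≠ i → p φ j = 0

/-- `M(A)`: rank one projections in `A` whose range generators have a unique
nonzero coordinate. -/
def MSet (A : Set (Module.End (L0 Ω μ) (DI D))) :
    Set (Module.End (L0 Ω μ) (DI D)) :=
  {p | p ∈ A ∧ IsProjDI K D p ∧ HomogOneOp p ∧ SingleCoordRange D p}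

end DirectSum
/-- A Banach–Kantorovich space over `L⁰` with its `L⁰`-module structure. -/
structure BKSpace (Ω : Type) [MeasurableSpace Ω] (μ : Measure Ω)
    (X : Type*) [AddCommGroup X] [Module (L0 Ω μ) X] where
  nrm : X → L0R Ω μ
  nrm_nonneg : ∀ x, 0 ≤ nrm x
  nrm_eq_zero : ∀ x, nrm x = 0 ↔ x = 0
  nrm_smul : ∀ (c : L0 Ω μ) (x : X), nrm (c • x) = absL c * nrm x
  nrm_triangle : ∀ x y, nrm (x + y) ≤ nrm x + nrm y
  ddecomp : DDecompN nrm
  complete : BOCompleteN nrm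

/-!
Let `p = e ⊗ e`, a rank-one idempotent because `⟨e, e⟩ = 1`. Its image `q = α p` is a
finite-generated idempotent, and injectivity of `α` gives `q` full support (`π • q = 0 → π = 0`),
which yields vectors `ζ, f` with `⟨q ζ, f⟩ = 1`. Put `x φ = α(φ ⊗ e) ζ` and
`y ψ = α⁻¹(ψ ⊗ f) e`. From `a ∘ (φ ⊗ u) = (a φ) ⊗ u` one gets `x a = α(a) x` and `y b = α⁻¹(b) y`
on `F(D)`, and evaluating these on rank-one operators gives `x y = 1` and `y x = ⟨y ζ, e⟩ = 1`.
Hence `α(a) = x a y`.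
-/

section Disjointify
variable {R ι : Type*} [CommRing R] [LinearOrder ι] [Fintype ι] {s : ι → R}

theorem orthogonalIdempotents_mul_prod_one_sub (hs : ∀ i, IsIdempotentElem (s i)) :
    OrthogonalIdempotents fun i => s i * ∏ j with j < i, (1 - s j) where
  idem i := (hs i).mul <| Finset.prod_induction _ _ (fun _ _ => IsIdempotentElem.mul)
    IsIdempotentElem.one fun j _ => (hs j).one_sub
  ortho := by
    suffices ∀ i j, i < j →
        (s i * ∏ k with k < i, (1 - s k)) * (s j * ∏ k with k < j, (1 - s k)) = 0 by
      intro i j hij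
      rcases hij.lt_or_gt with h | h
      · exact this i j h
      · rw [mul_comm]; exact this j i h
    intro i j hij
    rw [← Finset.mul_prod_erase _ _ (by simpa using hij : i ∈ Finset.univ.filter (· < j))]
    generalize ∏ k with k < i, (1 - s k) = a
    generalize ∏ k ∈ (Finset.univ.filter (· < j)).erase i, (1 - s k) = b
    linear_combination a * s j * b * (hs i).mul_one_sub_self

theorem completeOrthogonalIdempotents_mul_prod_one_sub (hs : ∀ i, IsIdempotentElem (s i))
    (h : ∏ i, (1 - s i) = 0) :
    CompleteOrthogonalIdempotents fun i => s i * ∏ j with j < i, (1 - s j) where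
  __ := orthogonalIdempotents_mul_prod_one_sub hs
  complete := by
    have := Finset.prod_one_sub_ordered Finset.univ s
    rw [h, eq_comm, sub_eq_zero] at this
    exact this.symm

end Disjointify

lemma coeFn_conjL (f : L0 Ω μ) : ⇑(conjL f) =ᵐ[μ] fun ω => starRingEnd ℂ (f ω) :=
  AEEqFun.coeFn_comp _ _ f

noncomputable def conjRingHom : L0 Ω μ →+* L0 Ω μ where
  toFun := conjL
  map_one' := AEEqFun.ext <| by
    filter_upwards [coeFn_conjL 1, AEEqFun.coeFn_one (β := ℂ) (μ := μ)] with ω h h1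
    simp [h, h1]
  map_mul' a b := AEEqFun.ext <| by
    filter_upwards [coeFn_conjL (a * b), AEEqFun.coeFn_mul a b,
      AEEqFun.coeFn_mul (conjL a) (conjL b), coeFn_conjL a, coeFn_conjL b] with ω h h₁ h₂ h₃ h₄
    simp [h, h₁, h₂, h₃, h₄]
  map_zero' := AEEqFun.ext <| by
    filter_upwards [coeFn_conjL 0, AEEqFun.coeFn_zero (β := ℂ) (μ := μ)] with ω h h0
    simp [h, h0]
  map_add' a b := AEEqFun.ext <| by
    filter_upwards [coeFn_conjL (a + b), AEEqFun.coeFn_add a b,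
      AEEqFun.coeFn_add (conjL a) (conjL b), coeFn_conjL a, coeFn_conjL b] with ω h h₁ h₂ h₃ h₄
    simp [h, h₁, h₂, h₃, h₄]

lemma conjRingHom_apply (a : L0 Ω μ) : conjRingHom a = conjL a := rfl

lemma conjL_eq_self_of_isIdempotentElem {π : L0 Ω μ} (hπ : IsIdempotentElem π) :
    conjL π = π := AEEqFun.ext <| by
  filter_upwards [coeFn_conjL π, AEEqFun.coeFn_mul π π] with ω h h₁
  rw [hπ.eq] at h₁
  rcases IsIdempotentElem.iff_eq_zero_or_one.mp h₁.symm with h0 | h0 <;> simp [h, h0]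

/-- Pointwise inverse, with `0⁻¹ = 0`. -/
noncomputable def invL (t : L0 Ω μ) : L0 Ω μ := t.compMeasurable (·⁻¹) measurable_inv

lemma coeFn_invL (t : L0 Ω μ) : ⇑(invL t) =ᵐ[μ] fun ω => (t ω)⁻¹ :=
  AEEqFun.coeFn_compMeasurable _ _ t

lemma isIdempotentElem_invL_mul (t : L0 Ω μ) : IsIdempotentElem (invL t * t) := AEEqFun.ext <| by
  filter_upwards [AEEqFun.coeFn_mul (invL t * t) (invL t * t), AEEqFun.coeFn_mul (invL t) t,
    coeFn_invL t] with ω h h₁ h₂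
  simp only [h, Pi.mul_apply, h₁, h₂]
  rcases eq_or_ne (t ω) 0 with h0 | h0 <;> simp [h0]

lemma invL_mul_mul_self (t : L0 Ω μ) : invL t * t * t = t := AEEqFun.ext <| by
  filter_upwards [AEEqFun.coeFn_mul (invL t * t) t, AEEqFun.coeFn_mul (invL t) t,
    coeFn_invL t] with ω h h₁ h₂
  simp only [h, Pi.mul_apply, h₁, h₂]
  rcases eq_or_ne (t ω) 0 with h0 | h0 <;> simp [h0]

namespace KHInner

variable {X : Type*} [AddCommGroup X] [Module (L0 Ω μ) X] (K : KHInner Ω μ X)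

lemma inner_zero_left (y : X) : K.inner 0 y = 0 := by
  simpa using K.smul_left 0 0 y

lemma inner_smul_right (c : L0 Ω μ) (x y : X) :
    K.inner x (c • y) = conjL c * K.inner x y := by
  rw [K.conj_symm, K.smul_left, ← conjRingHom_apply, map_mul, conjRingHom_apply,
    conjRingHom_apply, ← K.conj_symm]

lemma inner_sum_left {ι : Type*} (s : Finset ι) (u : ι → X) (y : X) :
    K.inner (∑ i ∈ s, u i) y = ∑ i ∈ s, K.inner (u i) y :=
  map_sum (AddMonoidHom.mk' (K.inner · y) (K.add_left · · y)) u s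

lemma inner_sum_right {ι : Type*} (s : Finset ι) (x : X) (v : ι → X) :
    K.inner x (∑ j ∈ s, v j) = ∑ j ∈ s, K.inner x (v j) := by
  rw [K.conj_symm, inner_sum_left, ← conjRingHom_apply, map_sum]
  simp only [conjRingHom_apply, ← K.conj_symm]

lemma smul_eq_zero_of_mul_inner_self_eq_zero {c : L0 Ω μ} {x : X}
    (h : c * K.inner x x = 0) : c • x = 0 := by
  refine K.definite _ ?_
  rw [K.smul_left, inner_smul_right]
  linear_combination conjL c * h

lemma inner_self_eq_one_of_knorm_eq_one {x : X} (hx : K.knorm x = 1) : K.inner x x = 1 := by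
  have hre : reL (K.inner x x) = 1 := AEEqFun.ext <| by
    filter_upwards [AEEqFun.ext_iff.mp hx, AEEqFun.coeFn_comp _ Real.continuous_sqrt
      (reL (K.inner x x)), AEEqFun.coeFn_one (β := ℝ) (μ := μ)] with ω h h₁ h₂
    rw [h₂, Pi.one_apply, ← Real.sqrt_eq_one]
    exact h₁.symm.trans (h.trans h₂)
  rw [K.self_real, hre]
  exact AEEqFun.ext <| by
    filter_upwards [AEEqFun.coeFn_comp _ Complex.continuous_ofReal (1 : L0R Ω μ),
      AEEqFun.coeFn_one (β := ℝ) (μ := μ), AEEqFun.coeFn_one (β := ℂ) (μ := μ)] with ω h h₁ h₂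
    simp [ofRealL, h, h₁, h₂]

lemma inner_sum_smul_sum_smul {ι : Type*} [Fintype ι] {P : ι → L0 Ω μ}
    (hP : OrthogonalIdempotents P) (a : ι → L0 Ω μ) (h : ι → X) :
    K.inner (∑ i, (P i * a i) • h i) (∑ j, P j • h j) = ∑ i, P i * a i * K.inner (h i) (h i) := by
  rw [inner_sum_left]
  refine Finset.sum_congr rfl fun i _ => ?_
  rw [K.smul_left, inner_sum_right, Finset.mul_sum, Finset.sum_eq_single i]
  · rw [inner_smul_right, conjL_eq_self_of_isIdempotentElem (hP.idem i)]
    linear_combination a i * K.inner (h i) (h i) * (hP.idem i).eq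
  · intro j _ hji
    rw [inner_smul_right, conjL_eq_self_of_isIdempotentElem (hP.idem j)]
    linear_combination a i * K.inner (h i) (h j) * hP.ortho hji.symm
  · simp

end KHInner

section FinGenOp

variable {M : Type*} [AddCommGroup M] [Module (L0 Ω μ) M] {a q : Module.End (L0 Ω μ) M}

lemma finGenOp_zero : FinGenOp (0 : Module.End (L0 Ω μ) M) :=
  ⟨0, Fin.elim0, fun _ => ⟨Fin.elim0, by simp⟩⟩

lemma FinGenOp.add {b : Module.End (L0 Ω μ) M} (ha : FinGenOp a) (hb : FinGenOp b) :
    FinGenOp (a + b) := by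
  obtain ⟨n, g, hg⟩ := ha
  obtain ⟨m, g', hg'⟩ := hb
  refine ⟨n + m, Fin.append g g', fun x => ?_⟩
  obtain ⟨c, hc⟩ := hg x
  obtain ⟨c', hc'⟩ := hg' x
  exact ⟨Fin.append c c', by simp [Fin.sum_univ_add, hc, hc']⟩

lemma FinGenOp.smul (c : L0 Ω μ) (ha : FinGenOp a) : FinGenOp (c • a) := by
  obtain ⟨n, g, hg⟩ := ha
  refine ⟨n, g, fun x => ?_⟩
  obtain ⟨d, hd⟩ := hg x
  exact ⟨fun i => c * d i, by simp [hd, Finset.smul_sum, smul_smul]⟩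

lemma FinGenOp.mul_right (ha : FinGenOp a) (b : Module.End (L0 Ω μ) M) : FinGenOp (a * b) := by
  obtain ⟨n, g, hg⟩ := ha
  exact ⟨n, g, fun x => hg (b x)⟩

lemma exists_apply_eq_sum_smul_apply_of_isIdempotentElem (hq : IsIdempotentElem q) {n : ℕ}
    {g : Fin n → M} (hg : ∀ x, ∃ c : Fin n → L0 Ω μ, q x = ∑ i, c i • g i) (x : M) :
    ∃ c : Fin n → L0 Ω μ, q x = ∑ i, c i • q (g i) := by
  obtain ⟨c, hc⟩ := hg x
  refine ⟨c, ?_⟩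
  rw [← LinearMap.congr_fun hq.eq x, Module.End.mul_apply, hc, map_sum]
  simp only [map_smul]

end FinGenOp

section RankOne

variable {X : Type*} [AddCommGroup X] [Module (L0 Ω μ) X] {K : KHInner Ω μ X}
  {D : Submodule (L0 Ω μ) X}

lemma rankOneE_apply (φ ψ η : D) : rankOneE K D φ ψ η = K.inner (η : X) (ψ : X) • φ := rfl

lemma mul_rankOneE (a : Module.End (L0 Ω μ) D) (φ ψ : D) :
    a * rankOneE K D φ ψ = rankOneE K D (a φ) ψ :=
  LinearMap.ext fun η => by simp [rankOneE_apply]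

lemma rankOneE_add_left (φ φ' ψ : D) :
    rankOneE K D (φ + φ') ψ = rankOneE K D φ ψ + rankOneE K D φ' ψ :=
  LinearMap.ext fun η => by simp [rankOneE_apply, smul_add]

lemma rankOneE_smul_left (c : L0 Ω μ) (φ ψ : D) :
    rankOneE K D (c • φ) ψ = c • rankOneE K D φ ψ :=
  LinearMap.ext fun η => by simp only [rankOneE_apply, LinearMap.smul_apply, smul_smul, mul_comm]

lemma finGenOp_rankOneE (φ ψ : D) : FinGenOp (rankOneE K D φ ψ) :=
  ⟨1, fun _ => φ, fun η => ⟨fun _ => K.inner (η : X) (ψ : X), by simp [rankOneE_apply]⟩⟩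

lemma isIdempotentElem_rankOneE_self {e : D} (he : K.inner (e : X) (e : X) = 1) :
    IsIdempotentElem (rankOneE K D e e) := by
  rw [IsIdempotentElem, mul_rankOneE, rankOneE_apply, he, one_smul]

/-- The key use of the `L⁰`-structure: the supports of `⟨q gᵢ, q gᵢ⟩` are disjointified into a
partition of unity `Pᵢ`, and on `Pᵢ` one divides by `⟨q gᵢ, q gᵢ⟩`. -/
theorem exists_inner_apply_eq_one {q : Module.End (L0 Ω μ) D} (hq : FinGenOp q)
    (hqq : IsIdempotentElem q) (hfull : ∀ π : L0 Ω μ, π • q = 0 → π = 0) :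
    ∃ ζ f : D, K.inner (q ζ : X) (f : X) = 1 := by
  obtain ⟨n, g, hg⟩ := hq
  set t : Fin n → L0 Ω μ := fun i => K.inner (q (g i) : X) (q (g i) : X)
  set s : Fin n → L0 Ω μ := fun i => invL (t i) * t i
  have hs (i : Fin n) : IsIdempotentElem (s i) := isIdempotentElem_invL_mul (t i)
  have hst (i : Fin n) : s i * t i = t i := invL_mul_mul_self (t i)
  have hQ : ∏ i, (1 - s i) = 0 := by
    refine hfull _ (LinearMap.ext fun η => ?_)
    obtain ⟨c, hc⟩ := exists_apply_eq_sum_smul_apply_of_isIdempotentElem hqq hg η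
    have hQt (i : Fin n) : (∏ i, (1 - s i)) * t i = 0 := by
      rw [← Finset.mul_prod_erase _ _ (Finset.mem_univ i)]
      linear_combination (∏ j ∈ Finset.univ.erase i, (1 - s j)) * (-hst i)
    have hQg (i : Fin n) : (∏ i, (1 - s i)) • q (g i) = 0 :=
      Subtype.ext (K.smul_eq_zero_of_mul_inner_self_eq_zero (hQt i))
    simp [hc, Finset.smul_sum, smul_comm _ (c _), hQg]
  set P : Fin n → L0 Ω μ := fun i => s i * ∏ j with j < i, (1 - s j)
  have hP : CompleteOrthogonalIdempotents P := completeOrthogonalIdempotents_mul_prod_one_sub hs hQ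
  refine ⟨∑ i, (P i * invL (t i)) • g i, ∑ j, P j • q (g j), ?_⟩
  simp only [map_sum, map_smul, Submodule.coe_sum, Submodule.coe_smul]
  rw [K.inner_sum_smul_sum_smul hP.toOrthogonalIdempotents, ← hP.complete]
  refine Finset.sum_congr rfl fun i _ => ?_
  linear_combination (∏ j with j < i, (1 - s j)) * (hs i).eq

end RankOne

section Automorphism

variable {M : Type*} [AddCommGroup M] [Module (L0 Ω μ) M]

structure IsFinGenAut (α : Module.End (L0 Ω μ) M → Module.End (L0 Ω μ) M) : Prop where
  bijOn : Set.BijOn α {a | FinGenOp a} {a | FinGenOp a}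
  map_add : ∀ a, FinGenOp a → ∀ b, FinGenOp b → α (a + b) = α a + α b
  map_smul : ∀ c : L0 Ω μ, ∀ a, FinGenOp a → α (c • a) = c • α a
  map_mul : ∀ a, FinGenOp a → ∀ b, FinGenOp b → α (a * b) = α a * α b

namespace IsFinGenAut

variable {α : Module.End (L0 Ω μ) M → Module.End (L0 Ω μ) M}

lemma map_finGenOp (hα : IsFinGenAut α) {a : Module.End (L0 Ω μ) M} (ha : FinGenOp a) :
    FinGenOp (α a) :=
  hα.bijOn.mapsTo ha

lemma map_zero (hα : IsFinGenAut α) : α 0 = 0 := by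
  simpa using hα.map_add 0 finGenOp_zero 0 finGenOp_zero

lemma invOn (hα : IsFinGenAut α) : Set.InvOn (Function.invFunOn α {a | FinGenOp a}) α
    {a | FinGenOp a} {a | FinGenOp a} :=
  hα.bijOn.invOn_invFunOn

lemma symm (hα : IsFinGenAut α) : IsFinGenAut (Function.invFunOn α {a | FinGenOp a}) := by
  set β := Function.invFunOn α {a | FinGenOp a}
  have hβ : Set.BijOn β {a | FinGenOp a} {a | FinGenOp a} := hα.bijOn.symm hα.invOn.symm
  have hαβ {b} (hb : FinGenOp b) : α (β b) = b := hα.invOn.2 hb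
  have hinj {a b} (ha : FinGenOp a) (hb : FinGenOp b) (h : α a = α b) : a = b :=
    hα.bijOn.injOn ha hb h
  refine ⟨hβ, fun a ha b hb => ?_, fun c a ha => ?_, fun a ha b hb => ?_⟩
  · refine hinj (hβ.mapsTo (ha.add hb)) ((hβ.mapsTo ha).add (hβ.mapsTo hb)) ?_
    rw [hα.map_add _ (hβ.mapsTo ha) _ (hβ.mapsTo hb), hαβ ha, hαβ hb, hαβ (ha.add hb)]
  · refine hinj (hβ.mapsTo (ha.smul c)) ((hβ.mapsTo ha).smul c) ?_
    rw [hα.map_smul _ _ (hβ.mapsTo ha), hαβ ha, hαβ (ha.smul c)]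
  · refine hinj (hβ.mapsTo (ha.mul_right b)) ((hβ.mapsTo ha).mul_right _) ?_
    rw [hα.map_mul _ (hβ.mapsTo ha) _ (hβ.mapsTo hb), hαβ ha, hαβ hb, hαβ (ha.mul_right b)]

end IsFinGenAut

end Automorphism

section Spatial

variable {X : Type*} [AddCommGroup X] [Module (L0 Ω μ) X] (K : KHInner Ω μ X)
  {D : Submodule (L0 Ω μ) X} {α : Module.End (L0 Ω μ) D → Module.End (L0 Ω μ) D}

namespace IsFinGenAut

noncomputable def intertwiner (hα : IsFinGenAut α) (u v : D) : Module.End (L0 Ω μ) D where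
  toFun φ := α (rankOneE K D φ u) v
  map_add' φ φ' := by
    simp only [rankOneE_add_left,
      hα.map_add _ (finGenOp_rankOneE φ u) _ (finGenOp_rankOneE φ' u), LinearMap.add_apply]
  map_smul' c φ := by
    simp only [rankOneE_smul_left, hα.map_smul c _ (finGenOp_rankOneE φ u),
      LinearMap.smul_apply, RingHom.id_apply]

variable {K}

lemma intertwiner_apply (hα : IsFinGenAut α) (u v φ : D) :
    hα.intertwiner K u v φ = α (rankOneE K D φ u) v := rfl

lemma intertwiner_map_apply (hα : IsFinGenAut α) {a : Module.End (L0 Ω μ) D} (ha : FinGenOp a)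
    (u v φ : D) :
    hα.intertwiner K u v (a φ) = α a (hα.intertwiner K u v φ) := by
  rw [intertwiner_apply, intertwiner_apply, ← mul_rankOneE,
    hα.map_mul _ ha _ (finGenOp_rankOneE φ u), Module.End.mul_apply]

lemma exists_inner_apply_rankOneE_self_eq_one (hα : IsFinGenAut α) {e : D}
    (he : K.inner (e : X) (e : X) = 1) :
    ∃ ζ f : D, K.inner (α (rankOneE K D e e) ζ : X) (f : X) = 1 := by
  set p := rankOneE K D e e
  have hp : FinGenOp p := finGenOp_rankOneE e e
  have hq : IsIdempotentElem (α p) := by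
    rw [IsIdempotentElem, ← hα.map_mul _ hp _ hp, (isIdempotentElem_rankOneE_self he).eq]
  refine exists_inner_apply_eq_one (hα.map_finGenOp hp) hq fun π hπ => ?_
  have hπp : π • p = 0 := hα.bijOn.injOn (hp.smul π) finGenOp_zero <| by
    rw [hα.map_smul _ _ hp, hπ, hα.map_zero]
  have hπe : π • e = 0 := by
    simpa [p, rankOneE_apply, he] using LinearMap.congr_fun hπp e
  simpa [K.smul_left, he, K.inner_zero_left] using
    congrArg (fun v : D => K.inner (v : X) (e : X)) hπe

theorem exists_spatial (hα : IsFinGenAut α) {e : D} (he : K.inner (e : X) (e : X) = 1) :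
    ∃ x y : Module.End (L0 Ω μ) D, x * y = 1 ∧ y * x = 1 ∧
      ∀ a, FinGenOp a → α a = x * a * y := by
  obtain ⟨ζ, f, hζf⟩ := hα.exists_inner_apply_rankOneE_self_eq_one he
  set x := hα.intertwiner K e ζ
  set y := hα.symm.intertwiner K f e
  have hxy : x * y = 1 := LinearMap.ext fun ψ => by
    rw [Module.End.mul_apply, hα.symm.intertwiner_apply,
      hα.intertwiner_map_apply (hα.symm.map_finGenOp (finGenOp_rankOneE ψ f)),
      hα.invOn.2 (finGenOp_rankOneE ψ f), rankOneE_apply, hα.intertwiner_apply, hζf, one_smul,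
      Module.End.one_apply]
  have hyx (φ : D) : y (x φ) = K.inner (y ζ : X) (e : X) • φ := by
    rw [hα.intertwiner_apply,
      hα.symm.intertwiner_map_apply (hα.map_finGenOp (finGenOp_rankOneE φ e)),
      hα.invOn.1 (finGenOp_rankOneE φ e), rankOneE_apply]
  have hy : y * x = 1 := by
    have hxe : x e = K.inner (y ζ : X) (e : X) • x e := by
      rw [← LinearMap.map_smul x, ← hyx, ← Module.End.mul_apply x y, hxy, Module.End.one_apply]
    have hd : K.inner (y ζ : X) (e : X) = 1 := by
      have hxe' : x e = α (rankOneE K D e e) ζ := rfl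
      simpa [K.smul_left, hxe', hζf] using
        congrArg (fun v : D => K.inner (v : X) (f : X)) hxe.symm
    exact LinearMap.ext fun φ => by
      rw [Module.End.mul_apply, hyx, hd, one_smul, Module.End.one_apply]
  refine ⟨x, y, hxy, hy, fun a ha => ?_⟩
  have hxa : x * a = α a * x := LinearMap.ext (hα.intertwiner_map_apply ha e ζ)
  rw [hxa, mul_assoc, hxy, mul_one]

end IsFinGenAut

end Spatial

theorem statement10_general {X : Type*} [AddCommGroup X] [Module (L0 Ω μ) X]
    (K : KHInner Ω μ X) (D : Submodule (L0 Ω μ) X)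
    (e : D) (he : K.knorm (e : X) = 1)
    (α : Module.End (L0 Ω μ) D → Module.End (L0 Ω μ) D)
    (hbij : Set.BijOn α {a | FinGenOp a} {a | FinGenOp a})
    (hadd : ∀ a, FinGenOp a → ∀ b, FinGenOp b → α (a + b) = α a + α b)
    (hsmul : ∀ c : L0 Ω μ, ∀ a, FinGenOp a → α (c • a) = c • α a)
    (hmul : ∀ a, FinGenOp a → ∀ b, FinGenOp b → α (a * b) = α a * α b) :
    ∃ x y : Module.End (L0 Ω μ) D, x * y = 1 ∧ y * x = 1 ∧
      ∀ a, FinGenOp a → α a = x * a * y :=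
  IsFinGenAut.exists_spatial ⟨hbij, hadd, hsmul, hmul⟩ (K.inner_self_eq_one_of_knorm_eq_one he)

/-- Every `L⁰`-linear automorphism of the algebra `F(D)` of
finite-generated `L⁰`-linear operators on `D` is spatial: `α(a) = x a x⁻¹` for an
invertible `x ∈ L(D)`. -/
theorem statement10 {X : Type*} [AddCommGroup X] [Module (L0 Ω μ) X]
    (K : KHInner Ω μ X) (hK : K.IsKH) (D : Submodule (L0 Ω μ) X)
    (hD : BODenseN K.knorm (D : Set X))
    (e : D) (he : K.knorm (e : X) = 1)
    (α : Module.End (L0 Ω μ) D → Module.End (L0 Ω μ) D)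
    (hbij : Set.BijOn α {a | FinGenOp a} {a | FinGenOp a})
    (hadd : ∀ a, FinGenOp a → ∀ b, FinGenOp b → α (a + b) = α a + α b)
    (hsmul : ∀ c : L0 Ω μ, ∀ a, FinGenOp a → α (c • a) = c • α a)
    (hmul : ∀ a, FinGenOp a → ∀ b, FinGenOp b → α (a * b) = α a * α b) :
    ∃ x y : Module.End (L0 Ω μ) D, x * y = 1 ∧ y * x = 1 ∧
      ∀ a, FinGenOp a → α a = x * a * y :=
  statement10_general K D e he α hbij hadd hsmul hmul

end KHPaper
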